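/- For real α > -1, y > 0, and n ≥ 1: the polynomial f_n(ρ) = L_n^{(α)}(ρ) - (I_{n,0}/I_{n-1,0}) L_{n-1}^{(α)}(ρ) satisfies f_n(-1/y) = (1/I_{n-1,0}) · (1/y) · Γ(α+n)/n!. -/

import Mathlib

open MeasureTheory Real Set

/-- Generalized Laguerre polynomial `L_n^{(α)}(x)`. -/
noncomputable def genLaguerre (α : ℝ) (n : ℕ) (x : ℝ) : ℝ :=
  ∑ j ∈ Finset.range (n + 1),
    (-1 : ℝ) ^ j * (Real.Gamma (α + n + 1) /
      (Real.Gamma (α + j + 1) * (Nat.factorial (n - j)))) * x ^ j / (Nat.factorial j)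

/-- The function `I_{m,n}^{(α,β)}(y)`. -/
noncomputable def Imn (α β y : ℝ) (m n : ℕ) : ℝ :=
  ∫ ρ in Ioi (0 : ℝ), (1 + y * ρ)⁻¹ * ρ ^ α * Real.exp (-ρ) *
    genLaguerre α m ρ * genLaguerre β n ρ


/-- The orthogonal polynomials for the weight (1+yρ)⁻¹ ρ^α e^(-ρ). -/
noncomputable def fpoly (α y : ℝ) (n : ℕ) (ρ : ℝ) : ℝ :=
  if n = 0 then 1
  else genLaguerre α n ρ -
    (Imn α α y n 0 / Imn α α y (n - 1) 0) * genLaguerre α (n - 1) ρ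

/-!
Put `x = -1/y` and let `P_m(ρ) = L_{m+1}(x) L_m(ρ) - L_m(x) L_{m+1}(ρ)` be the
Christoffel–Darboux numerator. The three-term recurrence of the Laguerre polynomials gives
`P_0(ρ) = ρ - x` and `(m+2) P_{m+1}(ρ) = (m+1+α) P_m(ρ) + (ρ - x) L_{m+1}(x) L_{m+1}(ρ)`.
Since `(ρ - x) / (1 + yρ) = 1/y`, integrating against `(1 + yρ)⁻¹ ρ^α e^{-ρ}` turns the factor
`ρ - x` into the plain Laguerre weight, against which `L_{m+1}` is orthogonal to constants.
So `K_m = ∫ (1 + yρ)⁻¹ ρ^α e^{-ρ} P_m(ρ)` satisfies `K_0 = Γ(α+1)/y` and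
`(m+2) K_{m+1} = (m+1+α) K_m`, i.e. `K_m = Γ(α+m+1) / (y (m+1)!)`; and
`K_m = L_{m+1}(x) I_{m,0} - L_m(x) I_{m+1,0} = I_{m,0} f_{m+1}(x)`.
-/

open Finset
open scoped Nat

lemma inv_Gamma_eq_mul_inv_Gamma_add_one (s : ℝ) : (Gamma s)⁻¹ = s * (Gamma (s + 1))⁻¹ := by
  rcases eq_or_ne s 0 with rfl | hs
  · simp [Real.Gamma_zero]
  · rw [Real.Gamma_add_one hs, mul_inv, ← mul_assoc, mul_inv_cancel₀ hs, one_mul]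

lemma Gamma_add_natCast_add_one_pos {α : ℝ} (hα : -1 < α) (j : ℕ) : 0 < Gamma (α + j + 1) :=
  Real.Gamma_pos_of_pos (by linarith [j.cast_nonneg (α := ℝ)])

lemma Gamma_natCast_sub_add_one {m j : ℕ} (h : j ≤ m) : Gamma ((m : ℝ) - j + 1) = (m - j)! := by
  rw [← Real.Gamma_nat_eq_factorial, Nat.cast_sub h]

/-- `(Γ (m - j + 1))⁻¹` is `1 / (m - j)!` for `j ≤ m` and vanishes at the poles `j > m`, so the
coefficients of all degrees obey one recurrence, with no boundary cases. -/
noncomputable def lagCoef (α : ℝ) (m j : ℕ) : ℝ :=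
  (-1) ^ j * Gamma (α + m + 1) / (Gamma (α + j + 1) * j !) * (Gamma ((m : ℝ) - j + 1))⁻¹

lemma genLaguerre_eq_sum_lagCoef (α : ℝ) {m N : ℕ} (hN : m < N) (x : ℝ) :
    genLaguerre α m x = ∑ j ∈ range N, lagCoef α m j * x ^ j := by
  calc genLaguerre α m x = ∑ j ∈ range (m + 1), lagCoef α m j * x ^ j := by
        refine sum_congr rfl fun j hj => ?_
        rw [lagCoef, Gamma_natCast_sub_add_one (Nat.lt_succ_iff.mp (mem_range.mp hj))]
        field_simp
    _ = ∑ j ∈ range N, lagCoef α m j * x ^ j := by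
        refine sum_subset (range_subset_range.2 hN) fun j _ hj => ?_
        obtain ⟨k, rfl⟩ : ∃ k, j = m + 1 + k := ⟨j - (m + 1), by simp at hj; omega⟩
        rw [lagCoef, show (m : ℝ) - (m + 1 + k : ℕ) + 1 = -(k : ℝ) by push_cast; ring,
          Real.Gamma_neg_nat_eq_zero]
        simp

lemma lagCoef_mul_Gamma {α : ℝ} (hα : -1 < α) {m j : ℕ} (hj : j ≤ m) :
    lagCoef α m j * Gamma (α + j + 1) = Gamma (α + m + 1) / m ! * ((-1) ^ j * m.choose j) := by
  have hG := (Gamma_add_natCast_add_one_pos hα j).ne'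
  have hc : (m.choose j : ℝ) ≠ 0 := by exact_mod_cast (Nat.choose_pos hj).ne'
  have hchoose : (m.choose j : ℝ) * j ! * (m - j)! = m ! := by
    exact_mod_cast Nat.choose_mul_factorial_mul_factorial hj
  rw [lagCoef, Gamma_natCast_sub_add_one hj, ← hchoose]
  field_simp

lemma lagCoef_zero_recurrence {α : ℝ} (hα : -1 < α) (m : ℕ) :
    (m + 2) * lagCoef α (m + 2) 0
      = (2 * m + α + 3) * lagCoef α (m + 1) 0 - (m + 1 + α) * lagCoef α m 0 := by
  have hm : α + m + 1 ≠ 0 := by linarith [m.cast_nonneg (α := ℝ)]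
  have hG := (Gamma_add_natCast_add_one_pos hα 0).ne'
  simp only [lagCoef]
  push_cast
  rw [show α + (m + 2) + 1 = α + m + 1 + 1 + 1 by ring,
    show α + (m + 1) + 1 = α + m + 1 + 1 by ring, show (m : ℝ) + 2 - 0 + 1 = m + 1 + 1 + 1 by ring,
    show (m : ℝ) + 1 - 0 + 1 = m + 1 + 1 by ring, show (m : ℝ) - 0 + 1 = m + 1 by ring,
    Real.Gamma_add_one (by linarith), Real.Gamma_add_one hm,
    inv_Gamma_eq_mul_inv_Gamma_add_one (m + 1), inv_Gamma_eq_mul_inv_Gamma_add_one (m + 1 + 1)]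
  field_simp
  ring

lemma lagCoef_succ_recurrence {α : ℝ} (hα : -1 < α) (m j : ℕ) :
    (m + 2) * lagCoef α (m + 2) (j + 1)
      = (2 * m + α + 3) * lagCoef α (m + 1) (j + 1) - (m + 1 + α) * lagCoef α m (j + 1)
        - lagCoef α (m + 1) j := by
  have hm : α + m + 1 ≠ 0 := by linarith [m.cast_nonneg (α := ℝ)]
  have hj : α + j + 1 ≠ 0 := by linarith [j.cast_nonneg (α := ℝ)]
  have hG := (Gamma_add_natCast_add_one_pos hα j).ne'
  simp only [lagCoef]
  push_cast
  rw [show α + (m + 2) + 1 = α + m + 1 + 1 + 1 by ring,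
    show α + (m + 1) + 1 = α + m + 1 + 1 by ring, show α + (j + 1) + 1 = α + j + 1 + 1 by ring,
    show (m : ℝ) + 2 - (j + 1) + 1 = m - (j + 1) + 1 + 1 + 1 by ring,
    show (m : ℝ) + 1 - (j + 1) + 1 = m - (j + 1) + 1 + 1 by ring,
    show (m : ℝ) + 1 - j + 1 = m - (j + 1) + 1 + 1 + 1 by ring,
    Real.Gamma_add_one (by linarith), Real.Gamma_add_one hm, Real.Gamma_add_one hj,
    inv_Gamma_eq_mul_inv_Gamma_add_one (m - (j + 1) + 1),
    inv_Gamma_eq_mul_inv_Gamma_add_one (m - (j + 1) + 1 + 1), Nat.factorial_succ]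
  push_cast
  field_simp
  ring

lemma genLaguerre_recurrence {α : ℝ} (hα : -1 < α) (m : ℕ) (x : ℝ) :
    (m + 2) * genLaguerre α (m + 2) x
      = (2 * m + α + 3 - x) * genLaguerre α (m + 1) x - (m + 1 + α) * genLaguerre α m x := by
  have hx : x * genLaguerre α (m + 1) x
      = ∑ j ∈ range (m + 2), lagCoef α (m + 1) j * x ^ (j + 1) := by
    rw [genLaguerre_eq_sum_lagCoef α (by omega : m + 1 < m + 2), mul_sum]
    exact sum_congr rfl fun j _ => by ring
  have hterm : ∀ j : ℕ, (m + 2) * (lagCoef α (m + 2) (j + 1) * x ^ (j + 1))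
      = (2 * m + α + 3) * (lagCoef α (m + 1) (j + 1) * x ^ (j + 1))
        - (m + 1 + α) * (lagCoef α m (j + 1) * x ^ (j + 1))
        - lagCoef α (m + 1) j * x ^ (j + 1) := fun j => by
    linear_combination x ^ (j + 1) * lagCoef_succ_recurrence hα m j
  rw [sub_mul, hx, genLaguerre_eq_sum_lagCoef α (by omega : m + 2 < m + 3),
    genLaguerre_eq_sum_lagCoef α (by omega : m + 1 < m + 3),
    genLaguerre_eq_sum_lagCoef α (by omega : m < m + 3)]
  simp only [sum_range_succ' _ (m + 2), mul_add, mul_sum, hterm, sum_sub_distrib]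
  linear_combination lagCoef_zero_recurrence hα m

lemma genLaguerre_zero {α : ℝ} (hα : -1 < α) (x : ℝ) : genLaguerre α 0 x = 1 := by
  have hG := (Gamma_add_natCast_add_one_pos hα 0).ne'
  simp_all [genLaguerre]

lemma genLaguerre_one {α : ℝ} (hα : -1 < α) (x : ℝ) : genLaguerre α 1 x = α + 1 - x := by
  have hα1 : α + 1 ≠ 0 := by linarith
  have hG := (Gamma_add_natCast_add_one_pos hα 0).ne'
  simp only [Nat.cast_zero, add_zero] at hG
  simp [genLaguerre, sum_range_succ, Real.Gamma_add_one hα1]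
  field_simp
  ring

lemma rpow_mul_exp_neg_mul_pow_eqOn (α : ℝ) (k : ℕ) :
    EqOn (fun ρ : ℝ => ρ ^ α * exp (-ρ) * ρ ^ k) (fun ρ => exp (-ρ) * ρ ^ (α + k + 1 - 1))
      (Ioi 0) := fun ρ hρ => by
  dsimp only
  rw [add_sub_cancel_right, rpow_add hρ, rpow_natCast]
  ring

lemma integrableOn_rpow_mul_exp_neg_mul_pow {α : ℝ} (hα : -1 < α) (k : ℕ) :
    IntegrableOn (fun ρ : ℝ => ρ ^ α * exp (-ρ) * ρ ^ k) (Ioi 0) :=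
  (GammaIntegral_convergent (by linarith [k.cast_nonneg (α := ℝ)])).congr_fun
    (rpow_mul_exp_neg_mul_pow_eqOn α k).symm measurableSet_Ioi

lemma integral_rpow_mul_exp_neg_mul_pow {α : ℝ} (hα : -1 < α) (k : ℕ) :
    ∫ ρ in Ioi 0, ρ ^ α * exp (-ρ) * ρ ^ k = Gamma (α + k + 1) := by
  rw [Gamma_eq_integral (by linarith [k.cast_nonneg (α := ℝ)])]
  exact setIntegral_congr_fun measurableSet_Ioi (rpow_mul_exp_neg_mul_pow_eqOn α k)

lemma rpow_mul_exp_neg_mul_genLaguerre (α : ℝ) (m : ℕ) (ρ : ℝ) :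
    ρ ^ α * exp (-ρ) * genLaguerre α m ρ
      = ∑ j ∈ range (m + 1), lagCoef α m j * (ρ ^ α * exp (-ρ) * ρ ^ j) := by
  rw [genLaguerre_eq_sum_lagCoef α (lt_add_one m), mul_sum]
  exact sum_congr rfl fun j _ => by ring

lemma integrableOn_rpow_mul_exp_neg_mul_genLaguerre {α : ℝ} (hα : -1 < α) (m : ℕ) :
    IntegrableOn (fun ρ : ℝ => ρ ^ α * exp (-ρ) * genLaguerre α m ρ) (Ioi 0) := by
  simp only [rpow_mul_exp_neg_mul_genLaguerre]
  exact integrable_finsetSum _ fun j _ =>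
    (integrableOn_rpow_mul_exp_neg_mul_pow hα j).const_mul _

lemma integral_rpow_mul_exp_neg_mul_genLaguerre {α : ℝ} (hα : -1 < α) {m : ℕ} (hm : m ≠ 0) :
    ∫ ρ in Ioi 0, ρ ^ α * exp (-ρ) * genLaguerre α m ρ = 0 := by
  simp only [rpow_mul_exp_neg_mul_genLaguerre]
  rw [integral_finsetSum _ fun j _ => (integrableOn_rpow_mul_exp_neg_mul_pow hα j).const_mul _]
  simp only [integral_const_mul, integral_rpow_mul_exp_neg_mul_pow hα]
  rw [sum_congr rfl fun j hj => lagCoef_mul_Gamma hα (Nat.lt_succ_iff.mp (mem_range.mp hj)),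
    ← mul_sum]
  have halt : ∑ j ∈ range (m + 1), ((-1 : ℝ) ^ j * m.choose j) = 0 := by
    exact_mod_cast Int.alternating_sum_range_choose_of_ne hm
  rw [halt, mul_zero]

lemma integrableOn_inv_one_add_mul_mul {y : ℝ} (hy : 0 ≤ y) {f : ℝ → ℝ}
    (hf : IntegrableOn f (Ioi 0)) :
    IntegrableOn (fun ρ => (1 + y * ρ)⁻¹ * f ρ) (Ioi 0) := by
  refine hf.bdd_mul (c := 1) (by fun_prop) ?_
  filter_upwards [self_mem_ae_restrict measurableSet_Ioi] with ρ (hρ : 0 < ρ)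
  have h1 : 1 ≤ 1 + y * ρ := by nlinarith
  rw [norm_inv, Real.norm_of_nonneg (by linarith)]
  exact inv_le_one_of_one_le₀ h1

lemma integral_inv_one_add_mul_mul_sub_neg_inv {y : ℝ} (hy : 0 < y) (f : ℝ → ℝ) :
    ∫ ρ in Ioi 0, (1 + y * ρ)⁻¹ * ((ρ - -1 / y) * f ρ) = 1 / y * ∫ ρ in Ioi 0, f ρ := by
  rw [← integral_const_mul]
  refine setIntegral_congr_fun measurableSet_Ioi fun ρ (hρ : 0 < ρ) => ?_
  have : 0 < 1 + y * ρ := by positivity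
  field_simp
  ring

noncomputable def laguerreKernel (α x : ℝ) (m : ℕ) (ρ : ℝ) : ℝ :=
  genLaguerre α (m + 1) x * genLaguerre α m ρ - genLaguerre α m x * genLaguerre α (m + 1) ρ

lemma laguerreKernel_zero {α : ℝ} (hα : -1 < α) (x ρ : ℝ) : laguerreKernel α x 0 ρ = ρ - x := by
  simp only [laguerreKernel, genLaguerre_zero hα, genLaguerre_one hα, zero_add]
  ring

lemma laguerreKernel_succ {α : ℝ} (hα : -1 < α) (x : ℝ) (m : ℕ) (ρ : ℝ) :
    (m + 2) * laguerreKernel α x (m + 1) ρ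
      = (m + 1 + α) * laguerreKernel α x m ρ
        + (ρ - x) * (genLaguerre α (m + 1) x * genLaguerre α (m + 1) ρ) := by
  simp only [laguerreKernel]
  linear_combination genLaguerre α (m + 1) ρ * genLaguerre_recurrence hα m x
    - genLaguerre α (m + 1) x * genLaguerre_recurrence hα m ρ

lemma integrableOn_rpow_mul_exp_neg_mul_laguerreKernel {α : ℝ} (hα : -1 < α) (x : ℝ)
    (m : ℕ) : IntegrableOn (fun ρ : ℝ => ρ ^ α * exp (-ρ) * laguerreKernel α x m ρ) (Ioi 0) := by
  refine IntegrableOn.congr_fun (f := fun ρ =>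
      genLaguerre α (m + 1) x * (ρ ^ α * exp (-ρ) * genLaguerre α m ρ)
        - genLaguerre α m x * (ρ ^ α * exp (-ρ) * genLaguerre α (m + 1) ρ))
    ?_ (fun ρ _ => by simp only [laguerreKernel]; ring) measurableSet_Ioi
  exact ((integrableOn_rpow_mul_exp_neg_mul_genLaguerre hα m).const_mul _).sub
    ((integrableOn_rpow_mul_exp_neg_mul_genLaguerre hα (m + 1)).const_mul _)

lemma integral_laguerreKernel {α y : ℝ} (hα : -1 < α) (hy : 0 < y) (m : ℕ) :
    ∫ ρ in Ioi 0, (1 + y * ρ)⁻¹ * (ρ ^ α * exp (-ρ) * laguerreKernel α (-1 / y) m ρ)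
      = 1 / y * (Gamma (α + m + 1) / (m + 1)!) := by
  induction m with
  | zero =>
    calc _ = ∫ ρ in Ioi 0, (1 + y * ρ)⁻¹ * ((ρ - -1 / y) * (ρ ^ α * exp (-ρ) * ρ ^ 0)) := by
          congr 1 with ρ
          rw [laguerreKernel_zero hα]
          ring
      _ = _ := by
          rw [integral_inv_one_add_mul_mul_sub_neg_inv hy, integral_rpow_mul_exp_neg_mul_pow hα]
          simp
  | succ m ih =>
    have hint := fun k => integrableOn_inv_one_add_mul_mul hy.le
      (integrableOn_rpow_mul_exp_neg_mul_laguerreKernel hα (-1 / y) k)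
    set K := ∫ ρ in Ioi 0,
      (1 + y * ρ)⁻¹ * (ρ ^ α * exp (-ρ) * laguerreKernel α (-1 / y) (m + 1) ρ) with hK
    have hstep : (m + 2) * K - (m + 1 + α) * (1 / y * (Gamma (α + m + 1) / (m + 1)!)) = 0 := by
      rw [hK, ← ih, ← integral_const_mul, ← integral_const_mul,
        ← integral_sub ((hint _).const_mul _) ((hint _).const_mul _)]
      calc _ = ∫ ρ in Ioi 0, (1 + y * ρ)⁻¹ * ((ρ - -1 / y) * (ρ ^ α * exp (-ρ)
              * (genLaguerre α (m + 1) (-1 / y) * genLaguerre α (m + 1) ρ))) := by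
            congr 1 with ρ
            linear_combination (1 + y * ρ)⁻¹ * ρ ^ α * exp (-ρ)
              * laguerreKernel_succ hα (-1 / y) m ρ
        _ = 0 := by
            rw [integral_inv_one_add_mul_mul_sub_neg_inv hy]
            simp_rw [mul_left_comm _ (genLaguerre α (m + 1) (-1 / y))]
            rw [integral_const_mul, integral_rpow_mul_exp_neg_mul_genLaguerre hα m.succ_ne_zero]
            ring
    have hm : α + m + 1 ≠ 0 := by linarith [m.cast_nonneg (α := ℝ)]
    have hf : ((m + 1)! : ℝ) ≠ 0 := by positivity
    push_cast
    rw [show α + (m + 1) + 1 = α + m + 1 + 1 by ring, Real.Gamma_add_one hm, Nat.factorial_succ]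
    push_cast
    field_simp at hstep ⊢
    linear_combination hstep

lemma Imn_zero_right {α β : ℝ} (hβ : -1 < β) (y : ℝ) (m : ℕ) :
    Imn α β y m 0 = ∫ ρ in Ioi 0, (1 + y * ρ)⁻¹ * (ρ ^ α * exp (-ρ) * genLaguerre α m ρ) := by
  simp only [Imn, genLaguerre_zero hβ, mul_one, mul_assoc]

lemma genLaguerre_mul_Imn_sub_genLaguerre_mul_Imn {α y : ℝ} (hα : -1 < α) (hy : 0 < y)
    (m : ℕ) :
    genLaguerre α (m + 1) (-1 / y) * Imn α α y m 0
        - genLaguerre α m (-1 / y) * Imn α α y (m + 1) 0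
      = 1 / y * (Gamma (α + m + 1) / (m + 1)!) := by
  have hint := fun k => integrableOn_inv_one_add_mul_mul hy.le
    (integrableOn_rpow_mul_exp_neg_mul_genLaguerre hα k)
  rw [Imn_zero_right hα, Imn_zero_right hα, ← integral_const_mul, ← integral_const_mul,
    ← integral_sub ((hint _).const_mul _) ((hint _).const_mul _), ← integral_laguerreKernel hα hy]
  congr 1 with ρ
  simp only [laguerreKernel]
  ring

theorem fpoly_at_neg_inv (α y : ℝ) (hα : -1 < α) (hy : 0 < y) (n : ℕ) (hn : 1 ≤ n)
    (hI : Imn α α y (n - 1) 0 ≠ 0) :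
    fpoly α y n (-1 / y) =
      (1 / Imn α α y (n - 1) 0) * (1 / y) * (Real.Gamma (α + n) / (Nat.factorial n)) := by
  obtain ⟨m, rfl⟩ : ∃ m, n = m + 1 := ⟨n - 1, by omega⟩
  rw [Nat.add_sub_cancel] at hI ⊢
  rw [fpoly, if_neg m.succ_ne_zero, Nat.add_sub_cancel, Nat.cast_succ, ← add_assoc, mul_assoc,
    ← genLaguerre_mul_Imn_sub_genLaguerre_mul_Imn hα hy m]
  field_simp
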